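/- For 0 < α < 1 and 0 < θ ≤ π, the series ∑_{k=0}^{∞} (−1)^k C(α,k) sin(kθ) converges absolutely to 2^α · sin^α(θ/2) · sin(α(θ − π)/2). -/

import Mathlib

open Real

/-- Generalized binomial coefficient `C(α, k) = α(α−1)⋯(α−k+1)/k!` for real `α`. -/
noncomputable def genBinom (α : ℝ) (k : ℕ) : ℝ :=
  (∏ i ∈ Finset.range k, (α - i)) / (Nat.factorial k)

/-!
For `0 < α ≤ 1` the coefficients `C(α, k)`, `k ≥ 1`, all have the sign `(-1)^(k+1)`, and the
partial sums of `∑ (-1)^k C(α, k)` telescope (Pascal's rule) to `(-1)^n C(α - 1, n) ≥ 0`;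
hence `∑ |C(α, k)| ≤ 2`. The binomial series `∑ C(α, k) z^k = (1 + z)^α` therefore extends by
continuity from the open unit disc to the closed one. At `z = -e^{iθ}` we have
`1 + z = 2 sin(θ/2) e^{i(θ - π)/2}`, and the imaginary part of `(1 + z)^α` is the claimed value.
-/

open Finset Nat Polynomial Complex Metric

lemma genBinom_eq_choose (α : ℝ) (k : ℕ) : genBinom α k = Ring.choose α k := by
  rw [Ring.choose_eq_smul, genBinom, smul_eq_mul, div_eq_inv_mul, ← aeval_eq_smeval,
    aeval_def, eval₂_eq_eval_map, descPochhammer_map, descPochhammer_eval_eq_prod_range]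

lemma genBinom_zero (α : ℝ) : genBinom α 0 = 1 := by simp [genBinom]

lemma genBinom_succ (α : ℝ) (k : ℕ) :
    genBinom α (k + 1) = genBinom (α - 1) k + genBinom (α - 1) (k + 1) := by
  simpa [genBinom_eq_choose] using Ring.choose_succ_succ (α - 1) k

lemma neg_one_pow_mul_genBinom (α : ℝ) (k : ℕ) :
    (-1) ^ k * genBinom α k = (∏ i ∈ range k, ((i : ℝ) - α)) / k ! := by
  simp_rw [genBinom, ← neg_sub α, prod_neg, card_range, mul_div_assoc]

lemma sum_range_neg_one_pow_mul_genBinom (α : ℝ) (n : ℕ) :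
    ∑ k ∈ range (n + 1), (-1) ^ k * genBinom α k = (-1) ^ n * genBinom (α - 1) n := by
  induction n with
  | zero => simp [genBinom_zero]
  | succ n ih =>
    rw [sum_range_succ, ih, genBinom_succ]
    ring

lemma neg_one_pow_mul_genBinom_nonneg {β : ℝ} (hβ : β ≤ 0) (k : ℕ) :
    0 ≤ (-1) ^ k * genBinom β k := by
  rw [neg_one_pow_mul_genBinom]
  exact div_nonneg (prod_nonneg fun i _ => by linarith [i.cast_nonneg (α := ℝ)]) (by positivity)

lemma abs_genBinom_succ {α : ℝ} (h0 : 0 ≤ α) (h1 : α ≤ 1) (k : ℕ) :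
    |genBinom α (k + 1)| = -((-1) ^ (k + 1) * genBinom α (k + 1)) := by
  have hprod : 0 ≤ ∏ i ∈ range k, (((i + 1 : ℕ) : ℝ) - α) :=
    prod_nonneg fun i _ => by push_cast; linarith [i.cast_nonneg (α := ℝ)]
  have hnonpos : (-1) ^ (k + 1) * genBinom α (k + 1) ≤ 0 := by
    rw [neg_one_pow_mul_genBinom, prod_range_succ']
    exact div_nonpos_of_nonpos_of_nonneg
      (mul_nonpos_of_nonneg_of_nonpos hprod (by simpa)) (by positivity)
  rw [← abs_of_nonpos hnonpos]
  simp [abs_mul]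

lemma sum_range_abs_genBinom {α : ℝ} (h0 : 0 ≤ α) (h1 : α ≤ 1) (n : ℕ) :
    ∑ k ∈ range (n + 1), |genBinom α k| = 2 - (-1) ^ n * genBinom (α - 1) n := by
  rw [← sum_range_neg_one_pow_mul_genBinom, sum_range_succ', sum_range_succ' _ n]
  simp only [abs_genBinom_succ h0 h1, sum_neg_distrib, genBinom_zero, abs_one, pow_zero, mul_one]
  ring

lemma summable_abs_genBinom {α : ℝ} (h0 : 0 ≤ α) (h1 : α ≤ 1) :
    Summable fun k => |genBinom α k| := by
  refine summable_of_sum_range_le (c := 2) (fun _ => abs_nonneg _) fun n => ?_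
  calc ∑ k ∈ range n, |genBinom α k| ≤ ∑ k ∈ range (n + 1), |genBinom α k| :=
        sum_le_sum_of_subset_of_nonneg (range_subset_range.2 n.le_succ) fun _ _ _ => abs_nonneg _
    _ ≤ 2 := by
        rw [sum_range_abs_genBinom h0 h1]
        linarith [neg_one_pow_mul_genBinom_nonneg (by linarith : α - 1 ≤ 0) n]

section PowerSeries

variable {𝕜 : Type*} [NormedField 𝕜]

lemma norm_mul_pow_le_of_norm_le_one (a : 𝕜) {z : 𝕜} (hz : ‖z‖ ≤ 1) (k : ℕ) :
    ‖a * z ^ k‖ ≤ ‖a‖ := by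
  rw [norm_mul, norm_pow]
  exact mul_le_of_le_one_right (norm_nonneg a) (pow_le_one₀ (norm_nonneg z) hz)

lemma continuousOn_tsum_mul_pow [CompleteSpace 𝕜] {a : ℕ → 𝕜} (ha : Summable fun k => ‖a k‖) :
    ContinuousOn (fun z => ∑' k, a k * z ^ k) (closedBall 0 1) :=
  continuousOn_tsum (fun _ => by fun_prop) ha fun k _ hz =>
    norm_mul_pow_le_of_norm_le_one _ (mem_closedBall_zero_iff.1 hz) k

end PowerSeries

lemma hasSum_genBinom_mul_pow (α : ℝ) {z : ℂ} (hz : ‖z‖ < 1) :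
    HasSum (fun k => (genBinom α k : ℂ) * z ^ k) ((1 + z) ^ (α : ℂ)) := by
  have := one_add_cpow_hasFPowerSeriesOnBall_zero (a := α).hasSum (y := z)
    (by simpa [← ENNReal.ofReal_one, Metric.eball_ofReal] using hz)
  simpa [binomialSeries, FormalMultilinearSeries.ofScalars_apply_eq, genBinom_eq_choose,
    Complex.ofReal_choose, mul_comm] using this

lemma tsum_genBinom_mul_pow {α : ℝ} (h0 : 0 < α) (h1 : α ≤ 1) {z : ℂ} (hz : ‖z‖ ≤ 1) :
    ∑' k, (genBinom α k : ℂ) * z ^ k = (1 + z) ^ (α : ℂ) := by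
  have hsum : ContinuousOn (fun z => ∑' k, (genBinom α k : ℂ) * z ^ k) (closedBall 0 1) :=
    continuousOn_tsum_mul_pow (by simpa using summable_abs_genBinom h0.le h1)
  have hpow : ContinuousOn (fun z : ℂ => (1 + z) ^ (α : ℂ)) (closedBall 0 1) := by
    intro w hw
    have hre : 0 ≤ (1 + w).re := by
      simp only [add_re, one_re]
      linarith [neg_abs_le w.re, abs_re_le_norm w, mem_closedBall_zero_iff.1 hw]
    -- at `w = -1` this is continuity of `x ↦ x ^ α` at `0`, which is where `0 < α` is needed
    exact ((continuousAt_cpow_const_of_re_pos (Or.inl hre) (by simpa)).comp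
      (continuousAt_const.add continuousAt_id)).continuousWithinAt
  refine Set.EqOn.of_subset_closure (fun w hw => (hasSum_genBinom_mul_pow α ?_).tsum_eq)
    hsum hpow ball_subset_closedBall (closure_ball (0 : ℂ) one_ne_zero).ge (by simpa)
  simpa using hw

lemma one_sub_exp_mul_I (θ : ℝ) :
    1 - exp (θ * I) = ((2 * Real.sin (θ / 2) : ℝ) : ℂ) * exp (((θ - π) / 2 : ℝ) * I) := by
  have hsplit : (((θ - π) / 2 : ℝ) : ℂ) * I = θ / 2 * I + -π / 2 * I := by push_cast; ring
  have hsq : exp (θ * I) = exp (θ / 2 * I) * exp (θ / 2 * I) := by rw [← Complex.exp_add]; ring_nf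
  have hinv : exp (-(θ / 2) * I) * exp (θ / 2 * I) = 1 := by rw [← Complex.exp_add]; simp
  rw [hsplit, Complex.exp_add, exp_neg_pi_div_two_mul_I]
  push_cast
  rw [Complex.sin, hsq]
  linear_combination
    (-1 : ℂ) * hinv + (exp (-(θ / 2) * I) - exp (θ / 2 * I)) * exp (θ / 2 * I) * I_sq

lemma sin_half_pos {θ : ℝ} (h0 : 0 < θ) (h2π : θ < 2 * π) : 0 < Real.sin (θ / 2) :=
  Real.sin_pos_of_pos_of_lt_pi (by linarith) (by linarith)

lemma norm_one_sub_exp_mul_I {θ : ℝ} (h0 : 0 < θ) (h2π : θ < 2 * π) :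
    ‖1 - exp (θ * I)‖ = 2 * Real.sin (θ / 2) := by
  rw [one_sub_exp_mul_I, norm_mul, norm_exp_ofReal_mul_I, mul_one, norm_real, Real.norm_of_nonneg]
  linarith [sin_half_pos h0 h2π]

lemma arg_one_sub_exp_mul_I {θ : ℝ} (h0 : 0 < θ) (h2π : θ < 2 * π) :
    arg (1 - exp (θ * I)) = (θ - π) / 2 := by
  rw [one_sub_exp_mul_I, arg_real_mul _ (by linarith [sin_half_pos h0 h2π]), exp_mul_I,
    arg_cos_add_sin_mul_I ⟨by linarith, by linarith⟩]

lemma im_one_sub_exp_mul_I_cpow {θ : ℝ} (h0 : 0 < θ) (h2π : θ < 2 * π) (α : ℝ) :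
    ((1 - exp (θ * I)) ^ (α : ℂ)).im =
      2 ^ α * Real.sin (θ / 2) ^ α * Real.sin (α * (θ - π) / 2) := by
  rw [cpow_ofReal_im, norm_one_sub_exp_mul_I h0 h2π, arg_one_sub_exp_mul_I h0 h2π,
    Real.mul_rpow zero_le_two (sin_half_pos h0 h2π).le]
  ring_nf

lemma im_mul_neg_exp_mul_I_pow (a θ : ℝ) (k : ℕ) :
    ((a : ℂ) * (-exp (θ * I)) ^ k).im = (-1) ^ k * a * Real.sin (k * θ) := by
  have : (a : ℂ) * (-exp (θ * I)) ^ k = (((-1) ^ k * a : ℝ) : ℂ) * exp ((k * θ : ℝ) * I) := by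
    rw [neg_pow, ← Complex.exp_nat_mul]
    push_cast
    ring_nf
  rw [this, im_ofReal_mul, exp_ofReal_mul_I_im]

/-- For `0 < α < 1` and `0 < θ ≤ π`, the series `∑_{k=0}^∞ (−1)^k C(α,k) sin(kθ)`
converges absolutely to `2^α · sin^α(θ/2) · sin(α(θ − π)/2)`. -/
theorem alternating_binom_sin_series
    (α θ : ℝ) (h0 : 0 < α) (h1 : α < 1) (hθ0 : 0 < θ) (hθπ : θ ≤ π) :
    (Summable fun k : ℕ => |(-1 : ℝ) ^ k * genBinom α k * Real.sin (k * θ)|) ∧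
    ∑' k : ℕ, (-1 : ℝ) ^ k * genBinom α k * Real.sin (k * θ)
      = (2 : ℝ) ^ α * Real.sin (θ / 2) ^ α * Real.sin (α * (θ - π) / 2) := by
  have hz : ‖-exp (θ * I)‖ ≤ 1 := by rw [norm_neg, norm_exp_ofReal_mul_I]
  have hsummable : Summable fun k => (genBinom α k : ℂ) * (-exp (θ * I)) ^ k :=
    .of_norm_bounded (summable_abs_genBinom h0.le h1.le) fun k =>
      (norm_mul_pow_le_of_norm_le_one _ hz k).trans_eq (norm_real _)
  simp_rw [← im_mul_neg_exp_mul_I_pow]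
  refine ⟨hsummable.norm.of_nonneg_of_le (fun _ => abs_nonneg _) fun _ => abs_im_le_norm _, ?_⟩
  rw [← im_tsum hsummable, tsum_genBinom_mul_pow h0 h1.le hz, ← sub_eq_add_neg,
    im_one_sub_exp_mul_I_cpow hθ0 (by linarith [pi_pos])]
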